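/- Let X be a topological space, N ∈ ℕ ∪ {∞}, and M = {g_i}_{i=1}^N ⊆ C_B(X) a countable family that separates and strongly separates points on X. Then d(x,y) = Σ_{i=1}^N 2^{−i} ( |g_i(x) − g_i(y)| ∧ 1 ) defines a metric on X whose metric topology equals the original topology of X. -/
import Mathlib


open Set Filter Topology

/-- A family `D` of real-valued functions separates points on `X`. -/
def SepPts {X : Type*} (D : Set (X → ℝ)) : Prop :=
  ∀ x y : X, x ≠ y → ∃ g ∈ D, g x ≠ g y

/-- A family `M` strongly separates points on the topological space `X`. -/
def SSepPts {X : Type*} [TopologicalSpace X] (M : Set (X → ℝ)) : Prop :=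
  ∀ (x : X) (O : Set X), IsOpen O → x ∈ O →
    ∃ (k : ℕ) (g : Fin k → X → ℝ), (∀ i, g i ∈ M) ∧
      ∃ ε > (0 : ℝ), ∀ y, y ∉ O → ∃ i, ε ≤ |g i y - g i x|

/-- `d(x,y) = Σ_{i=1}^N 2^{−i} (|g_i(x) − g_i(y)| ∧ 1)` for `N ∈ ℕ ∪ {∞}`. -/
noncomputable def seriesDist {X : Type*} (N : ℕ∞) (g : ℕ → X → ℝ) (x y : X) : ℝ :=
  ∑' i : {i : ℕ // 1 ≤ i ∧ (i : ℕ∞) ≤ N},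
    (2 : ℝ) ^ (-(i.1 : ℤ)) * min |g i.1 x - g i.1 y| 1

private lemma minTri (a b c : ℝ) : min |a - c| 1 ≤ min |a-b| 1 + min |b-c| 1 := by
  have n1 : (0:ℝ) ≤ min |a-b| 1 := le_min (abs_nonneg _) zero_le_one
  have n2 : (0:ℝ) ≤ min |b-c| 1 := le_min (abs_nonneg _) zero_le_one
  rcases le_or_gt 1 |a - b| with h | h
  · have e : min |a-b| 1 = 1 := min_eq_right h
    have := min_le_right |a-c| 1
    linarith
  rcases le_or_gt 1 |b - c| with h' | h'
  · have e : min |b-c| 1 = 1 := min_eq_right h'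
    have := min_le_right |a-c| 1
    linarith
  · rw [min_eq_left h.le, min_eq_left h'.le]
    exact (min_le_left _ _).trans (abs_sub_le a b c)

/-- If `M = {g_i}_{i=1}^N ⊆ C_B(X)` is a countable family that
separates and strongly separates points on `X`, then
`d(x,y) = Σ_{i=1}^N 2^{−i} (|g_i(x) − g_i(y)| ∧ 1)` is a metric on `X`
whose metric topology coincides with the topology of `X`. -/
theorem stmt6 {X : Type*} [t : TopologicalSpace X]
    (N : ℕ∞) (g : ℕ → X → ℝ)
    (hinj : Set.InjOn g {i : ℕ | 1 ≤ i ∧ (i : ℕ∞) ≤ N})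
    (M : Set (X → ℝ)) (hM : M = g '' {i : ℕ | 1 ≤ i ∧ (i : ℕ∞) ≤ N})
    (hMc : ∀ f ∈ M, Continuous f) (hMb : ∀ f ∈ M, ∃ C, ∀ x, |f x| ≤ C)
    (hsep : SepPts M) (hssp : SSepPts M) :
    (∀ x y : X, seriesDist N g x y = 0 ↔ x = y) ∧
    (∀ x y : X, seriesDist N g x y = seriesDist N g y x) ∧
    (∀ x y z : X, seriesDist N g x z ≤ seriesDist N g x y + seriesDist N g y z) ∧
    t = TopologicalSpace.generateFrom
      {s : Set X | ∃ (x : X) (ε : ℝ), 0 < ε ∧ s = {y | seriesDist N g x y < ε}} := by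

  set S : Set ℕ := {i : ℕ | 1 ≤ i ∧ (i : ℕ∞) ≤ N} with hSdef
  set T := fun (x y : X) (i : {i : ℕ // 1 ≤ i ∧ (i : ℕ∞) ≤ N}) =>
    (2 : ℝ) ^ (-(i.1 : ℤ)) * min |g i.1 x - g i.1 y| 1 with hTdef
  have hd : ∀ x y, seriesDist N g x y = ∑' i, T x y i := fun x y => rfl
  -- summability
  have hu : Summable (fun i : {i : ℕ // 1 ≤ i ∧ (i : ℕ∞) ≤ N} => (2:ℝ)^(-(i.1:ℤ))) := by
    apply Summable.subtype (f := fun i : ℕ => (2:ℝ)^(-(i:ℤ)))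
    have : (fun i : ℕ => (2:ℝ)^(-(i:ℤ))) = fun i : ℕ => (1/2:ℝ)^i := by
      funext i; rw [zpow_neg, zpow_natCast]; simp [inv_pow]
    rw [this]
    exact summable_geometric_of_lt_one (by norm_num) (by norm_num)
  have hnn : ∀ x y i, 0 ≤ T x y i := by
    intro x y i
    exact mul_nonneg (by positivity) (le_min (abs_nonneg _) zero_le_one)
  have hle : ∀ x y i, T x y i ≤ (2:ℝ)^(-(i.1:ℤ)) := by
    intro x y i
    exact mul_le_of_le_one_right (by positivity) (min_le_right _ _)
  have hsum : ∀ x y, Summable (T x y) := fun x y =>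
    Summable.of_nonneg_of_le (hnn x y) (hle x y) hu
  have hgi : ∀ i : {i : ℕ // 1 ≤ i ∧ (i : ℕ∞) ≤ N}, g i.1 ∈ M := by
    intro i; rw [hM]; exact ⟨i.1, i.2, rfl⟩
  -- part 1
  have hiff : ∀ x y : X, seriesDist N g x y = 0 ↔ x = y := by
    intro x y
    constructor
    · intro h
      by_contra hxy
      obtain ⟨f, hf, hne⟩ := hsep x y hxy
      rw [hM] at hf
      obtain ⟨n, hn, rfl⟩ := hf
      have hpos : 0 < seriesDist N g x y := by
        rw [hd]
        refine Summable.tsum_pos (hsum x y) (hnn x y) ⟨n, hn⟩ ?_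
        exact mul_pos (by positivity)
          (lt_min (abs_pos.2 (sub_ne_zero.2 hne)) one_pos)
      linarith
    · rintro rfl
      rw [hd]
      have : ∀ i, T x x i = 0 := by
        intro i; simp [hTdef, min_eq_left (zero_le_one' ℝ)]
      simp [this]
  have hsymm : ∀ x y : X, seriesDist N g x y = seriesDist N g y x := by
    intro x y
    rw [hd, hd]
    exact tsum_congr fun i => by rw [hTdef]; simp only []; rw [abs_sub_comm]
  have htri : ∀ x y z : X, seriesDist N g x z ≤ seriesDist N g x y + seriesDist N g y z := by
    intro x y z
    rw [hd, hd, hd, ← Summable.tsum_add (hsum x y) (hsum y z)]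
    refine Summable.tsum_le_tsum (fun i => ?_) (hsum x z) ((hsum x y).add (hsum y z))
    have := minTri (g i.1 x) (g i.1 y) (g i.1 z)
    simp only [hTdef]
    nlinarith [this, (show (0:ℝ) < (2:ℝ)^(-(i.1:ℤ)) by positivity)]
  refine ⟨hiff, hsymm, htri, ?_⟩
  set B : Set (Set X) :=
    {s : Set X | ∃ (x : X) (ε : ℝ), 0 < ε ∧ s = {y | seriesDist N g x y < ε}} with hBdef
  -- continuity of d(x, ·)
  have hcont : ∀ x : X, Continuous (fun y => seriesDist N g x y) := by
    intro x
    have : (fun y => seriesDist N g x y) = fun y => ∑' i, T x y i := by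
      funext y; exact hd x y
    rw [this]
    refine continuous_tsum (fun i => ?_) hu (fun i y => ?_)
    · exact continuous_const.mul
        (((continuous_const.sub (hMc _ (hgi i))).abs).min continuous_const)
    · rw [Real.norm_eq_abs, abs_of_nonneg (hnn x y i)]
      exact hle x y i
  refine le_antisymm (le_generateFrom ?_) ?_
  · rintro s ⟨x, ε, hε, rfl⟩
    exact isOpen_Iio.preimage (hcont x)
  · intro O hO
    -- around every point of O there is a ball inside O
    have hball : ∀ x ∈ O, ∃ δ > (0:ℝ), ∀ y, seriesDist N g x y < δ → y ∈ O := by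
      intro x hx
      obtain ⟨k, G, hGM, ε, hε, hGy⟩ := hssp x O hO hx
      have hGS : ∀ i, ∃ m, m ∈ S ∧ g m = G i := by
        intro i
        have := hGM i
        rw [hM] at this
        exact this
      choose m hmS hgm using hGS
      by_cases hk : k = 0
      · subst hk
        exact ⟨1, one_pos, fun y _ => by
          by_contra hy
          exact (hGy y hy).choose.elim0⟩
      · haveI : Nonempty (Fin k) := ⟨⟨0, Nat.pos_of_ne_zero hk⟩⟩
        set δ := Finset.univ.inf' Finset.univ_nonempty
          (fun i : Fin k => (2:ℝ)^(-(m i : ℤ)) * min ε 1) with hδdef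
        have hδpos : 0 < δ := by
          rw [hδdef, Finset.lt_inf'_iff]
          intro i _
          exact mul_pos (by positivity) (lt_min hε one_pos)
        refine ⟨δ, hδpos, fun y hdy => ?_⟩
        by_contra hy
        obtain ⟨i, hi⟩ := hGy y hy
        set j : {i : ℕ // 1 ≤ i ∧ (i : ℕ∞) ≤ N} := ⟨m i, hmS i⟩ with hjdef
        have h1 : T x y j ≤ seriesDist N g x y := by
          rw [hd]
          exact Summable.le_tsum (hsum x y) j (fun j' _ => hnn x y j')
        have h2 : δ ≤ (2:ℝ)^(-(m i:ℤ)) * min ε 1 :=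
          Finset.inf'_le _ (Finset.mem_univ i)
        have h3 : |g (m i) x - g (m i) y| = |G i y - G i x| := by
          rw [hgm i, abs_sub_comm]
        have h4 : min ε 1 ≤ min |g (m i) x - g (m i) y| 1 := by
          rw [h3]; exact min_le_min hi le_rfl
        have h5 : T x y j = (2:ℝ)^(-(m i:ℤ)) * min |g (m i) x - g (m i) y| 1 := rfl
        nlinarith [(show (0:ℝ) < (2:ℝ)^(-(m i:ℤ)) by positivity)]
    choose δ hδpos hδ using hball
    have hO_eq : O = ⋃₀ {s | s ∈ B ∧ s ⊆ O} := by
      ext y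
      constructor
      · intro hy
        refine ⟨{z | seriesDist N g y z < δ y hy}, ⟨⟨y, δ y hy, hδpos y hy, rfl⟩, ?_⟩, ?_⟩
        · intro z hz; exact hδ y hy z hz
        · show seriesDist N g y y < δ y hy
          rw [(hiff y y).2 rfl]; exact hδpos y hy
      · rintro ⟨s, ⟨_, hsO⟩, hys⟩
        exact hsO hys
    rw [hO_eq]
    exact TopologicalSpace.GenerateOpen.sUnion _ fun s hs =>
      TopologicalSpace.GenerateOpen.basic s hs.1
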